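/- Let G = (V,E) be a 3-sparse, 5-regular graph, X ⊂ V a 7-set and Y ⊂ V an 8-set with X ∩ Y = {a,b} and ab ∈ E. Then d(X,Y) ≤ 4 and X ∪ Y is a (10 - d(X,Y))-set. -/
import Mathlib

open Finset

variable {V : Type*} [Fintype V] [DecidableEq V]

/-- `i(X)`: the number of edges of `G` with both endpoints in `X`. -/
def edgesWithin (G : SimpleGraph V) [DecidableRel G.Adj] (X : Finset V) : ℕ :=
  ((X ×ˢ X).filter fun p => G.Adj p.1 p.2).card / 2

/-- `d(X,Y)`: the number of edges of `G` with one endpoint in `X \ Y` and the other in `Y \ X`. -/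
def edgesBetween (G : SimpleGraph V) [DecidableRel G.Adj] (X Y : Finset V) : ℕ :=
  (((X \ Y) ×ˢ (Y \ X)).filter fun p => G.Adj p.1 p.2).card

/-- `G` is 3-sparse: `i(X) ≤ 3|X| - 6` for all `X` with `|X| ≥ 3`. -/
def Sparse3 (G : SimpleGraph V) [DecidableRel G.Adj] : Prop :=
  ∀ X : Finset V, 3 ≤ X.card → edgesWithin G X + 6 ≤ 3 * X.card

/-- The set of common neighbours of `u` and `v`. -/
def commonNbrs (G : SimpleGraph V) [DecidableRel G.Adj] (u v : V) : Finset V :=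
  Finset.univ.filter fun t => G.Adj u t ∧ G.Adj v t

lemma even_swap_closed (S : Finset (V × V)) (h1 : ∀ p ∈ S, p.1 ≠ p.2)
    (h2 : ∀ p ∈ S, Prod.swap p ∈ S) : Even S.card := by
  induction S using Finset.strongInduction with
  | _ S ih =>
    rcases S.eq_empty_or_nonempty with rfl | ⟨p, hp⟩
    · simp
    · have hps : Prod.swap p ∈ S := h2 p hp
      have hne : p ≠ Prod.swap p := by
        intro h
        exact h1 p hp (by simpa [Prod.ext_iff] using congrArg Prod.fst h)
      have hsubset : ({p, Prod.swap p} : Finset (V × V)) ⊆ S := by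
        intro q hq
        rcases Finset.mem_insert.1 hq with rfl | hq
        · exact hp
        · rw [Finset.mem_singleton] at hq; subst hq; exact hps
      have hss : S \ {p, Prod.swap p} ⊂ S :=
        Finset.sdiff_ssubset hsubset ⟨p, by simp⟩
      have hEven : Even (S \ {p, Prod.swap p}).card := by
        refine ih _ hss (fun q hq => h1 q (Finset.mem_sdiff.1 hq).1) (fun q hq => ?_)
        rcases Finset.mem_sdiff.1 hq with ⟨hqS, hqn⟩
        refine Finset.mem_sdiff.2 ⟨h2 q hqS, fun hmem => hqn ?_⟩
        rcases Finset.mem_insert.1 hmem with h | h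
        · simp [← h]
        · rw [Finset.mem_singleton] at h
          have : q = p := Prod.swap_injective (by simpa using h)
          simp [this]
      have hcard : S.card = (S \ {p, Prod.swap p}).card + 2 := by
        have h2le : ({p, Prod.swap p} : Finset (V × V)).card = 2 := Finset.card_pair hne
        have := Finset.card_sdiff_of_subset hsubset
        have hle := Finset.card_le_card hsubset
        omega
      rw [hcard]
      exact hEven.add (by decide)

lemma two_mul_edgesWithin (G : SimpleGraph V) [DecidableRel G.Adj] (X : Finset V) :
    2 * edgesWithin G X = ((X ×ˢ X).filter fun p => G.Adj p.1 p.2).card := by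
  have hEven : Even ((X ×ˢ X).filter fun p => G.Adj p.1 p.2).card := by
    refine even_swap_closed _ (fun p hp => ?_) (fun p hp => ?_)
    · exact (Finset.mem_filter.1 hp).2.ne
    · rcases Finset.mem_filter.1 hp with ⟨hmem, hadj⟩
      rcases Finset.mem_product.1 hmem with ⟨h1, h2⟩
      exact Finset.mem_filter.2 ⟨Finset.mem_product.2 ⟨h2, h1⟩, hadj.symm⟩
  obtain ⟨t, ht⟩ := hEven
  rw [edgesWithin, ht]
  omega

theorem stmt12 (G : SimpleGraph V) [DecidableRel G.Adj]
    (hreg : ∀ v, G.degree v = 5) (hsp : Sparse3 G)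
    (X Y : Finset V)
    (hX : edgesWithin G X + 7 = 3 * X.card)
    (hY : edgesWithin G Y + 8 = 3 * Y.card)
    (a b : V) (hab : a ≠ b) (hadj : G.Adj a b) (hint : X ∩ Y = {a, b}) :
    edgesBetween G X Y ≤ 4 ∧
    edgesWithin G (X ∪ Y) + (10 - edgesBetween G X Y) = 3 * (X ∪ Y).card := by
  classical
  set P : V × V → Prop := fun p => G.Adj p.1 p.2 with hP
  -- rewrite filters over products of subsets as filters over univ
  have hfilt : ∀ A B : Finset V,
      ((A ×ˢ B).filter P) =
        ((Finset.univ ×ˢ Finset.univ).filter fun p => p.1 ∈ A ∧ p.2 ∈ B ∧ P p) := by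
    intro A B
    ext p
    simp [Finset.mem_filter, Finset.mem_product, and_assoc]
  have key :
      ((X ×ˢ X).filter P).card + ((Y ×ˢ Y).filter P).card
        + (((X \ Y) ×ˢ (Y \ X)).filter P).card + (((Y \ X) ×ˢ (X \ Y)).filter P).card
      = (((X ∪ Y) ×ˢ (X ∪ Y)).filter P).card + (((X ∩ Y) ×ˢ (X ∩ Y)).filter P).card := by
    rw [hfilt X X, hfilt Y Y, hfilt (X \ Y) (Y \ X), hfilt (Y \ X) (X \ Y),
      hfilt (X ∪ Y) (X ∪ Y), hfilt (X ∩ Y) (X ∩ Y)]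
    rw [Finset.card_filter, Finset.card_filter, Finset.card_filter, Finset.card_filter,
      Finset.card_filter, Finset.card_filter, ← Finset.sum_add_distrib,
      ← Finset.sum_add_distrib, ← Finset.sum_add_distrib, ← Finset.sum_add_distrib]
    refine Finset.sum_congr rfl fun p _ => ?_
    by_cases hPp : P p <;> by_cases h1 : p.1 ∈ X <;> by_cases h2 : p.1 ∈ Y <;>
      by_cases h3 : p.2 ∈ X <;> by_cases h4 : p.2 ∈ Y <;>
      simp [Finset.mem_union, Finset.mem_inter, Finset.mem_sdiff, h1, h2, h3, h4, hPp]
  -- the two "between" counts are equal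
  have hswap : (((Y \ X) ×ˢ (X \ Y)).filter P).card = (((X \ Y) ×ˢ (Y \ X)).filter P).card := by
    refine Finset.card_bij' (fun p _ => Prod.swap p) (fun p _ => Prod.swap p) ?_ ?_ ?_ ?_
    · intro p hp
      rcases Finset.mem_filter.1 hp with ⟨hmem, hPp⟩
      rcases Finset.mem_product.1 hmem with ⟨ha, hb⟩
      exact Finset.mem_filter.2 ⟨Finset.mem_product.2 ⟨hb, ha⟩, hPp.symm⟩
    · intro p hp
      rcases Finset.mem_filter.1 hp with ⟨hmem, hPp⟩
      rcases Finset.mem_product.1 hmem with ⟨ha, hb⟩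
      exact Finset.mem_filter.2 ⟨Finset.mem_product.2 ⟨hb, ha⟩, hPp.symm⟩
    · intro p _; rfl
    · intro p _; rfl
  -- the intersection contributes exactly 2 ordered pairs
  have hintcard : (((X ∩ Y) ×ˢ (X ∩ Y)).filter P).card = 2 := by
    rw [hint]
    have : (({a, b} ×ˢ ({a, b} : Finset V)).filter P) = {(a, b), (b, a)} := by
      ext p
      obtain ⟨x, y⟩ := p
      simp only [Finset.mem_filter, Finset.mem_product, Finset.mem_insert,
        Finset.mem_singleton, hP]
      constructor
      · rintro ⟨⟨h1 | h1, h2 | h2⟩, hPp⟩ <;> subst h1 <;> subst h2 <;>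
          first
          | exact absurd hPp (G.irrefl)
          | simp [Prod.ext_iff]
      · rintro (h | h) <;> injection h with h1 h2 <;> subst h1 <;> subst h2 <;>
          simp [hadj, hadj.symm]
    rw [this]
    rw [Finset.card_pair (by simp [Prod.ext_iff, hab])]
  have h2X := two_mul_edgesWithin G X
  have h2Y := two_mul_edgesWithin G Y
  have h2U := two_mul_edgesWithin G (X ∪ Y)
  have hcards : (X ∪ Y).card + (X ∩ Y).card = X.card + Y.card :=
    Finset.card_union_add_card_inter X Y
  have hci : (X ∩ Y).card = 2 := by rw [hint]; exact Finset.card_pair hab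
  have hXle : X.card ≤ (X ∪ Y).card := Finset.card_le_card Finset.subset_union_left
  have hUcard : 3 ≤ (X ∪ Y).card := by omega
  have hsparse := hsp (X ∪ Y) hUcard
  unfold edgesBetween
  rw [hswap, hintcard] at key
  simp only [hP] at key
  omega
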